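/- Localization of square roots: if γ is a nonnegative bounded operator on L²(ℝ³) and χ is a multiplication operator by a real function with |χ(r)| ≤ 1, then χ* γ^{1/2} χ ≤ (χ* γ χ)^{1/2} as operators. -/

import Mathlib

/-!
Work in the C⋆-algebra of bounded operators. Multiplication by `χ` is self-adjoint with
`‖χ‖ ≤ 1`, so `χ² ≤ 1`. With `s = γ^{1/2}` and `x = χ s χ ≥ 0`,
`x² = (s χ)* χ² (s χ) ≤ (s χ)* (s χ) = χ γ χ = t²`,
and operator monotonicity of the square root turns `x² ≤ t²` into `x ≤ t`.
-/

open scoped NNReal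

namespace CStarAlgebra

variable {A : Type*} [CStarAlgebra A] [PartialOrder A] [StarOrderedRing A]

lemma le_of_mul_self_le_mul_self {a b : A} (ha : 0 ≤ a) (hb : 0 ≤ b) (h : a * a ≤ b * b) :
    a ≤ b := by
  simpa only [CFC.sqrt_mul_self a, CFC.sqrt_mul_self b] using CFC.sqrt_le_sqrt _ _ h

lemma mul_star_le_one_of_norm_le_one {c : A} (hc : ‖c‖ ≤ 1) : c * star c ≤ 1 := by
  rw [← norm_le_one_iff_of_nonneg _ (mul_star_self_nonneg c),
    CStarRing.norm_self_mul_star]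
  nlinarith [norm_nonneg c]

theorem star_left_conjugate_le_of_mul_self_eq {s t c : A} (hs : 0 ≤ s) (ht : 0 ≤ t)
    (hc : ‖c‖ ≤ 1) (h : t * t = star c * (s * s) * c) : star c * s * c ≤ t := by
  have hs' : star s = s := hs.isSelfAdjoint.star_eq
  refine le_of_mul_self_le_mul_self (star_left_conjugate_nonneg hs c) ht ?_
  calc star c * s * c * (star c * s * c) = star (s * c) * (c * star c) * (s * c) := by
        simp only [star_mul, hs', mul_assoc]
    _ ≤ star (s * c) * 1 * (s * c) :=
        star_left_conjugate_le_conjugate (mul_star_le_one_of_norm_le_one hc) _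
    _ = t * t := by simp only [h, star_mul, hs', mul_one, mul_assoc]

end CStarAlgebra

namespace ContinuousLinearMap

variable {E : Type*} [NormedAddCommGroup E] [InnerProductSpace ℂ E] [CompleteSpace E]

theorem isPositive_sub_conj_of_comp_self_eq {s t c : E →L[ℂ] E} (hs : s.IsPositive)
    (ht : t.IsPositive) (hc : IsSelfAdjoint c) (hc₁ : ‖c‖ ≤ 1)
    (h : t ∘L t = c ∘L (s ∘L s) ∘L c) : (t - c ∘L s ∘L c).IsPositive := by
  rw [← nonneg_iff_isPositive] at hs ht
  have := CStarAlgebra.star_left_conjugate_le_of_mul_self_eq hs ht hc₁ (by rwa [hc.star_eq, mul_assoc])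
  rwa [hc.star_eq, mul_assoc, le_def] at this

end ContinuousLinearMap

namespace MeasureTheory.Lp

variable {α 𝕜 : Type*} [MeasurableSpace α] {μ : Measure α} [RCLike 𝕜]

lemma isSelfAdjoint_of_ae_eq_ofReal_mul {m : Lp 𝕜 2 μ →L[𝕜] Lp 𝕜 2 μ} {φ : α → ℝ}
    (hm : ∀ f, m f =ᵐ[μ] fun x => (φ x : 𝕜) * f x) : IsSelfAdjoint m := by
  refine ((ContinuousLinearMap.eq_adjoint_iff m m).mpr fun f g => ?_).symm
  rw [L2.inner_def, L2.inner_def]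
  refine integral_congr_ae ?_
  filter_upwards [hm f, hm g] with x hf hg
  simp only [RCLike.inner_apply, hf, hg, map_mul, RCLike.conj_ofReal]
  ring

lemma opNorm_le_of_ae_eq_mul {p : ENNReal} [Fact (1 ≤ p)] {m : Lp 𝕜 p μ →L[𝕜] Lp 𝕜 p μ}
    {φ : α → 𝕜} {C : ℝ≥0} (hφ : ∀ x, ‖φ x‖ ≤ C) (hm : ∀ f, m f =ᵐ[μ] fun x => φ x * f x) :
    ‖m‖ ≤ C :=
  m.opNorm_le_bound C.2 fun f => norm_le_mul_norm_of_ae_le_mul <| by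
    filter_upwards [hm f] with x hx
    rw [hx, norm_mul]
    exact mul_le_mul_of_nonneg_right (hφ x) (norm_nonneg _)

end MeasureTheory.Lp

open MeasureTheory

noncomputable section

abbrev E3 := EuclideanSpace ℝ (Fin 3)
abbrev H := Lp ℂ 2 (volume : Measure E3)

/-- `sγ` and `t` stand for `γ^{1/2}` and `(χ γ χ)^{1/2}`, characterized as the positive operators
whose squares are `γ` and `χ γ χ`. -/
theorem localization_of_sqrt (γ sγ t χ : H →L[ℂ] H)
    (hsγ : sγ.IsPositive) (hsq : sγ ∘L sγ = γ)
    (ht : t.IsPositive) (htsq : t ∘L t = χ ∘L γ ∘L χ)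
    (χf : E3 → ℝ) (hb : ∀ r, |χf r| ≤ 1)
    (hχ : ∀ f : H, ⇑(χ f) =ᵐ[volume] fun r => (χf r : ℂ) * f r) :
    (t - χ ∘L sγ ∘L χ).IsPositive := by
  subst hsq
  exact ContinuousLinearMap.isPositive_sub_conj_of_comp_self_eq hsγ ht
    (Lp.isSelfAdjoint_of_ae_eq_ofReal_mul hχ)
    (Lp.opNorm_le_of_ae_eq_mul (C := 1) (fun r => by simpa using hb r) hχ) htsq

end
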